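/- Let A, B ⊆ ℕ and let γ be a (2, B)-divisible numbering. If for every total A-computable binary function h: ℕ × ℕ → ℕ there is a total B-computable function f: ℕ → ℕ such that h(n, f(n)) ∼_γ f(n) for all n, then A is Turing reducible to B (A ≤_T B). -/

import Mathlib

open Nat Part

/-- Partial functions on `ℕ` computable relative to an oracle set `A`. -/
inductive OracleRecursiveIn (A : Set ℕ) : (ℕ →. ℕ) → Prop
  | zero : OracleRecursiveIn A (pure 0)
  | succ : OracleRecursiveIn A ↑Nat.succ
  | left : OracleRecursiveIn A ↑fun n : ℕ => n.unpair.1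
  | right : OracleRecursiveIn A ↑fun n : ℕ => n.unpair.2
  | oracle : OracleRecursiveIn A ↑fun n : ℕ => A.indicator 1 n
  | pair {f g} : OracleRecursiveIn A f → OracleRecursiveIn A g →
      OracleRecursiveIn A fun n => Nat.pair <$> f n <*> g n
  | comp {f g} : OracleRecursiveIn A f → OracleRecursiveIn A g →
      OracleRecursiveIn A fun n => g n >>= f
  | prec {f g} : OracleRecursiveIn A f → OracleRecursiveIn A g →
      OracleRecursiveIn A (Nat.unpaired fun a n =>
        n.rec (f a) fun y IH => do let i ← IH; g (Nat.pair a (Nat.pair y i)))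
  | rfind {f} : OracleRecursiveIn A f →
      OracleRecursiveIn A fun a => Nat.rfind fun n => (fun m => m = 0) <$> f (Nat.pair a n)

/-- A total function `f : ℕ → ℕ` is `A`-computable. -/
def OracleComputableIn (A : Set ℕ) (f : ℕ → ℕ) : Prop :=
  OracleRecursiveIn A fun n => Part.some (f n)

/-- A total binary function is `A`-computable. -/
def OracleComputableIn₂ (A : Set ℕ) (h : ℕ → ℕ → ℕ) : Prop :=
  OracleComputableIn A fun n => h n.unpair.1 n.unpair.2

/-- The characteristic function of a set of naturals. -/
noncomputable def chi (A : Set ℕ) : ℕ → ℕ := A.indicator 1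

/-- Turing reducibility: `A ≤_T B`. -/
def TuringLE (A B : Set ℕ) : Prop := OracleComputableIn B (chi A)

/-- `A` is computable. -/
def SetComputable (A : Set ℕ) : Prop := OracleComputableIn ∅ (chi A)

/-- `X` is computably enumerable in `A`: `X` is the domain of a partial
`A`-computable function. -/
def CEIn (A : Set ℕ) (X : Set ℕ) : Prop :=
  ∃ p : ℕ →. ℕ, OracleRecursiveIn A p ∧ X = p.Dom

/-- `A ≤_γ B` (`A` is `(γ,B)`-low): every total `A`-computable function has a
`B`-computable `γ`-lift. -/
def GammaLE (γ : ℕ → ℕ → Prop) (A B : Set ℕ) : Prop :=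
  ∀ f : ℕ → ℕ, OracleComputableIn A f →
    ∃ g : ℕ → ℕ, OracleComputableIn B g ∧ ∀ n, γ (f n) (g n)

/-- `A` is `γ`-low: `A ≤_γ ∅`. -/
def GammaLow (γ : ℕ → ℕ → Prop) (A : Set ℕ) : Prop := GammaLE γ A ∅

/-- `γ` is `(n, A)`-divisible (for finite `n`). -/
def DivisibleFin (γ : ℕ → ℕ → Prop) (n : ℕ) (A : Set ℕ) : Prop :=
  ∃ (x : Fin n → ℕ) (X : Fin n → Set ℕ),
    (∀ i, CEIn A (X i)) ∧
    (∀ i, {m | γ (x i) m} ⊆ X i) ∧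
    (∀ i j, i ≠ j → {m | γ (x i) m} ∩ X j = ∅)

/-- `γ` is `(ω, A)`-divisible. -/
def DivisibleOmega (γ : ℕ → ℕ → Prop) (A : Set ℕ) : Prop :=
  ∃ (x : ℕ → ℕ) (X : ℕ → Set ℕ),
    OracleComputableIn A x ∧
    CEIn A {k : ℕ | k.unpair.2 ∈ X k.unpair.1} ∧
    (∀ i, {m | γ (x i) m} ⊆ X i) ∧
    (∀ i j, i ≠ j → {m | γ (x i) m} ∩ X j = ∅)

/-- `γ` is `A`-precomplete: every partial `A`-computable function has a total
`A`-computable totalization modulo `γ`. -/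
def PrecompleteIn (γ : ℕ → ℕ → Prop) (A : Set ℕ) : Prop :=
  ∀ ψ : ℕ →. ℕ, OracleRecursiveIn A ψ →
    ∃ f : ℕ → ℕ, OracleComputableIn A f ∧ ∀ n, ∀ y ∈ ψ n, γ y (f n)

/-- `γ` is a c.e. numbering. -/
def CENumbering (γ : ℕ → ℕ → Prop) : Prop :=
  CEIn ∅ {k : ℕ | γ k.unpair.1 k.unpair.2}

/-- The `e`-th partial computable function. -/
def phi (e : ℕ) : ℕ →. ℕ := (Denumerable.ofNat Nat.Partrec.Code e).eval

/-- The `e`-th computably enumerable set. -/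
def Wset (e : ℕ) : Set ℕ := (phi e).Dom

/-- The halting set `∅'`. -/
def halting : Set ℕ := {e : ℕ | (phi e e).Dom}

/-! The selector `h n _ := if n ∈ A then x₀ else x₁` is `A`-computable, so the hypothesis yields a
`B`-computable `f` with `f n ∈ [x₀]` for `n ∈ A` and `f n ∈ [x₁]` for `n ∉ A`. Since `[x₀] ⊆ X₀`,
`[x₁] ⊆ X₁` and each class misses the other set, `A = f⁻¹ X₀` and `Aᶜ = f⁻¹ X₁` are both c.e. in `B`,
and Post's theorem relative to `B` gives `A ≤_T B`.

Post's theorem is proved through the use principle: a `B`-oracle computation reads only finitely many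
bits of `B`, so every `B`-partial computable function is the limit, along the initial segments of the
characteristic sequence of `B`, of a partial computable function of that segment. Deciding `A` is then a
`B`-computable search over (segment length, number of steps) for a halting run of either
approximation. -/

open Filter

theorem Part.some_bind_pfun (a : ℕ) (p : ℕ →. ℕ) : Part.some a >>= p = p a :=
  Part.bind_some a p

-- The `oracle` constructor takes the indicator with values in `Part ℕ`.
theorem Set.indicator_one_part (B : Set ℕ) (n : ℕ) :
    B.indicator (1 : ℕ → Part ℕ) n = Part.some (B.indicator 1 n) := by
  by_cases hn : n ∈ B <;> simp [hn] <;> rfl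

theorem Part.mem_pair_seq {x y : Part ℕ} {v : ℕ} :
    v ∈ Nat.pair <$> x <*> y ↔ ∃ a ∈ x, ∃ b ∈ y, Nat.pair a b = v := by
  simp [Seq.seq, Part.mem_bind_iff, Part.mem_map_iff]

theorem Nat.mem_rfind_of_forall_le {p q : ℕ →. Bool} {y : ℕ} (hy : y ∈ Nat.rfind p)
    (h : ∀ m ≤ y, ∀ b ∈ p m, b ∈ q m) : y ∈ Nat.rfind q := by
  rw [Nat.mem_rfind] at hy ⊢
  exact ⟨h y le_rfl _ hy.1, fun hm => h _ hm.le _ (hy.2 hm)⟩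

namespace OracleRecursiveIn

variable {B : Set ℕ}

theorem of_eq {f g : ℕ →. ℕ} (hf : OracleRecursiveIn B f) (H : ∀ n, f n = g n) :
    OracleRecursiveIn B g :=
  funext H ▸ hf

theorem of_partrec {f : ℕ →. ℕ} (hf : Nat.Partrec f) : OracleRecursiveIn B f := by
  induction hf with
  | zero => exact zero
  | succ => exact succ
  | left => exact left
  | right => exact right
  | pair _ _ ihf ihg => exact pair ihf ihg
  | comp _ _ ihf ihg => exact comp ihf ihg
  | prec _ _ ihf ihg => exact prec ihf ihg
  | rfind _ ih => exact rfind ih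

end OracleRecursiveIn

namespace OracleComputableIn

variable {B : Set ℕ} {f g : ℕ → ℕ}

theorem of_computable (hf : Computable f) : OracleComputableIn B f :=
  OracleRecursiveIn.of_partrec (Partrec.nat_iff.1 hf)

theorem indicator : OracleComputableIn B (B.indicator 1) :=
  OracleRecursiveIn.oracle.of_eq (Set.indicator_one_part B)

theorem comp (hg : OracleComputableIn B g) (hf : OracleComputableIn B f) :
    OracleComputableIn B fun n => g (f n) :=
  (OracleRecursiveIn.comp hg hf).of_eq fun _ => Part.bind_some _ _

theorem pair (hf : OracleComputableIn B f) (hg : OracleComputableIn B g) :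
    OracleComputableIn B fun n => Nat.pair (f n) (g n) :=
  (OracleRecursiveIn.pair hf hg).of_eq fun _ => by simp [Seq.seq]

theorem ite_mem [DecidablePred (· ∈ B)] (a b : ℕ) :
    OracleComputableIn B fun n => if n ∈ B then a else b := by
  have hsel : Computable fun v : ℕ => if v = 0 then b else a :=
    (Primrec.ite (Primrec.eq.comp Primrec.id (Primrec.const 0)) (Primrec.const b)
      (Primrec.const a)).to_comp
  refine ((of_computable hsel).comp indicator).of_eq fun n => ?_
  by_cases hn : n ∈ B <;> simp [hn]

theorem nat_rec (z : ℕ) {g : ℕ → ℕ → ℕ}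
    (hg : OracleComputableIn B fun m => g m.unpair.1 m.unpair.2) :
    OracleComputableIn B fun l => Nat.rec (motive := fun _ => ℕ) z (fun y IH => g y IH) l := by
  have hstep : OracleComputableIn B fun w => g w.unpair.2.unpair.1 w.unpair.2.unpair.2 :=
    hg.comp (of_computable (Computable.snd.comp Computable.unpair))
  have hrec := OracleRecursiveIn.prec (of_computable (Computable.const z) : OracleComputableIn B _)
    hstep
  refine (OracleRecursiveIn.comp hrec ((of_computable (Computable.const 0)).pair
    (of_computable Computable.id))).of_eq fun l => ?_
  simp only [Part.bind_eq_bind, Part.bind_some, Nat.unpaired, Nat.unpair_pair, id]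
  induction l with
  | zero => rfl
  | succ l ih => exact (congrArg (Part.bind · _) ih).trans (Part.bind_some _ _)

theorem find {T : ℕ → ℕ → ℕ} (hT : OracleComputableIn B fun m => T m.unpair.1 m.unpair.2)
    (hex : ∀ n, ∃ t, T n t = 0) : OracleComputableIn B fun n => Nat.find (hex n) :=
  (OracleRecursiveIn.rfind hT).of_eq fun n => by
    refine Part.eq_some_iff.2 (Nat.mem_rfind.2 ⟨?_, fun hm => ?_⟩)
    · simpa using Nat.find_spec (hex n)
    · simpa using Nat.find_min (hex n) hm

end OracleComputableIn

theorem CEIn.preimage {B X : Set ℕ} {f : ℕ → ℕ} (hX : CEIn B X) (hf : OracleComputableIn B f) :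
    CEIn B (f ⁻¹' X) := by
  obtain ⟨p, hp, rfl⟩ := hX
  refine ⟨_, OracleRecursiveIn.comp hp hf, Set.ext fun n => ?_⟩
  show (p (f n)).Dom ↔ (Part.some (f n) >>= p).Dom
  rw [Part.some_bind_pfun]

noncomputable def oracleString (B : Set ℕ) (l : ℕ) : List ℕ := (List.range l).map (B.indicator 1)

theorem getElem?_oracleString (B : Set ℕ) (l n : ℕ) :
    (oracleString B l)[n]? = if n < l then Option.some (B.indicator 1 n) else Option.none := by
  by_cases h : n < l <;> simp [oracleString, h]

theorem oracleComputableIn_encode_oracleString (B : Set ℕ) :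
    OracleComputableIn B fun l => Encodable.encode (oracleString B l) := by
  have happend : Computable fun w : ℕ =>
      Encodable.encode (Denumerable.ofNat (List ℕ) w.unpair.2 ++ [w.unpair.1]) :=
    Computable.encode.comp (Computable.list_append.comp
      ((Computable.ofNat _).comp (Computable.snd.comp Computable.unpair))
      (Computable.list_cons.comp (Computable.fst.comp Computable.unpair) (Computable.const [])))
  have hstep : OracleComputableIn B fun m =>
      Encodable.encode (Denumerable.ofNat (List ℕ) m.unpair.2 ++ [B.indicator 1 m.unpair.1]) :=
    ((OracleComputableIn.of_computable happend).comp
      ((OracleComputableIn.indicator.comp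
        (.of_computable (Computable.fst.comp Computable.unpair))).pair
        (.of_computable (Computable.snd.comp Computable.unpair)))).of_eq fun m => by simp
  refine (OracleComputableIn.nat_rec 0 (g := fun y s =>
    Encodable.encode (Denumerable.ofNat (List ℕ) s ++ [B.indicator 1 y])) hstep).of_eq fun l => ?_
  congr 1
  induction l with
  | zero => rfl
  | succ l ih =>
    dsimp only at ih
    simp [ih, oracleString, List.range_succ]

structure IsOracleApprox (B : Set ℕ) (p : ℕ →. ℕ) (q : List ℕ → ℕ → Part ℕ) : Prop where
  sound : ∀ l n, ∀ y ∈ q (oracleString B l) n, y ∈ p n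
  complete : ∀ n, ∀ y ∈ p n, ∀ᶠ l in atTop, y ∈ q (oracleString B l) n

def HasPartrecApprox (B : Set ℕ) (p : ℕ →. ℕ) : Prop :=
  ∃ q : List ℕ → ℕ → Part ℕ, Partrec₂ q ∧ IsOracleApprox B p q

namespace HasPartrecApprox

variable {B : Set ℕ} {f g : ℕ →. ℕ}

theorem of_partrec (hf : Nat.Partrec f) : HasPartrecApprox B f :=
  ⟨fun _ n => f n, (Partrec.nat_iff.2 hf).comp Computable.snd,
    ⟨fun _ _ _ h => h, fun _ _ h => Eventually.of_forall fun _ => h⟩⟩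

theorem oracle : HasPartrecApprox B fun n => Part.some (B.indicator 1 n) := by
  refine ⟨fun σ n => (σ[n]? : Part ℕ), Computable.list_getElem?.ofOption, ⟨fun l n y hy => ?_,
    fun n y hy => (eventually_gt_atTop n).mono fun l hl => ?_⟩⟩
  · rw [getElem?_oracleString] at hy
    split_ifs at hy
    · simpa using hy
    · simp at hy
  · simp [getElem?_oracleString, hl, Part.mem_some_iff.1 hy]

theorem pair (hf : HasPartrecApprox B f) (hg : HasPartrecApprox B g) :
    HasPartrecApprox B fun n => Nat.pair <$> f n <*> g n := by
  obtain ⟨qf, hqf, hf⟩ := hf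
  obtain ⟨qg, hqg, hg⟩ := hg
  refine ⟨fun σ n => Nat.pair <$> qf σ n <*> qg σ n, ?_, ⟨fun l n y hy => ?_, fun n y hy => ?_⟩⟩
  · have hqg' : Partrec fun p : (List ℕ × ℕ) × ℕ => (qg p.1.1 p.1.2).map (Nat.pair p.2) :=
      Partrec.map
        (hqg.comp (Computable.fst.comp Computable.fst) (Computable.snd.comp Computable.fst))
        (Primrec₂.natPair.to_comp.comp (Computable.snd.comp Computable.fst) Computable.snd)
    refine (hqf.bind hqg'.to₂).of_eq fun x => Part.ext fun v => ?_
    simp only [Part.mem_pair_seq, Part.mem_bind_iff, Part.mem_map_iff]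
  · obtain ⟨a, ha, b, hb, rfl⟩ := Part.mem_pair_seq.1 hy
    exact Part.mem_pair_seq.2 ⟨a, hf.sound l n a ha, b, hg.sound l n b hb, rfl⟩
  · obtain ⟨a, ha, b, hb, rfl⟩ := Part.mem_pair_seq.1 hy
    filter_upwards [hf.complete n a ha, hg.complete n b hb] with l hla hlb
    exact Part.mem_pair_seq.2 ⟨a, hla, b, hlb, rfl⟩

theorem comp (hf : HasPartrecApprox B f) (hg : HasPartrecApprox B g) :
    HasPartrecApprox B fun n => g n >>= f := by
  obtain ⟨qf, hqf, hf⟩ := hf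
  obtain ⟨qg, hqg, hg⟩ := hg
  refine ⟨fun σ n => qg σ n >>= qf σ, hqg.bind (hqf.comp (Computable.fst.comp Computable.fst)
    Computable.snd), ⟨fun l n y hy => ?_, fun n y hy => ?_⟩⟩
  · obtain ⟨i, hi, hy⟩ := Part.mem_bind_iff.1 hy
    exact Part.mem_bind_iff.2 ⟨i, hg.sound l n i hi, hf.sound l i y hy⟩
  · obtain ⟨i, hi, hy⟩ := Part.mem_bind_iff.1 hy
    filter_upwards [hg.complete n i hi, hf.complete i y hy] with l hli hly
    exact Part.mem_bind_iff.2 ⟨i, hli, hly⟩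

theorem prec (hf : HasPartrecApprox B f) (hg : HasPartrecApprox B g) :
    HasPartrecApprox B (Nat.unpaired fun a n =>
      n.rec (f a) fun y IH => do let i ← IH; g (Nat.pair a (Nat.pair y i))) := by
  obtain ⟨qf, hqf, hf⟩ := hf
  obtain ⟨qg, hqg, hg⟩ := hg
  refine ⟨fun σ m => m.unpair.2.rec (qf σ m.unpair.1) fun y IH =>
      IH.bind fun i => qg σ (Nat.pair m.unpair.1 (Nat.pair y i)), ?_,
    ⟨fun l m y hy => ?_, fun m y hy => ?_⟩⟩
  · have hfirst : Computable fun x : List ℕ × ℕ => x.2.unpair.1 :=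
      Computable.fst.comp (Computable.unpair.comp Computable.snd)
    exact Partrec.nat_rec (Computable.snd.comp (Computable.unpair.comp Computable.snd))
      (hqf.comp Computable.fst hfirst)
      (hqg.comp (Computable.fst.comp Computable.fst) (Primrec₂.natPair.to_comp.comp
        (hfirst.comp Computable.fst) (Primrec₂.natPair.to_comp.comp
          (Computable.fst.comp Computable.snd) (Computable.snd.comp Computable.snd)))).to₂
  · dsimp only [Nat.unpaired]
    generalize m.unpair.2 = n at hy ⊢
    induction n generalizing y with
    | zero => exact hf.sound l _ y hy
    | succ n ih =>
      obtain ⟨i, hi, hy⟩ := Part.mem_bind_iff.1 hy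
      exact Part.mem_bind_iff.2 ⟨i, ih i hi, hg.sound l _ y hy⟩
  · dsimp only [Nat.unpaired] at hy
    generalize m.unpair.2 = n at hy ⊢
    induction n generalizing y with
    | zero => exact hf.complete _ y hy
    | succ n ih =>
      obtain ⟨i, hi, hy⟩ := Part.mem_bind_iff.1 hy
      filter_upwards [ih i hi, hg.complete _ y hy] with l hli hly
      exact Part.mem_bind_iff.2 ⟨i, hli, hly⟩

theorem rfind (hf : HasPartrecApprox B f) :
    HasPartrecApprox B fun a => Nat.rfind fun n => (fun m => m = 0) <$> f (Nat.pair a n) := by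
  obtain ⟨qf, hqf, hf⟩ := hf
  refine ⟨fun σ a => Nat.rfind fun n => (fun m => decide (m = 0)) <$> qf σ (Nat.pair a n), ?_,
    ⟨fun l a y hy => ?_, fun a y hy => ?_⟩⟩
  · have hzero : Computable₂ fun (_ : (List ℕ × ℕ) × ℕ) (m : ℕ) => decide (m = 0) :=
      (Primrec.eq.comp Primrec.snd (Primrec.const 0)).decide.to_comp
    exact Partrec.rfind (Partrec.map (hqf.comp (Computable.fst.comp Computable.fst)
      (Primrec₂.natPair.to_comp.comp (Computable.snd.comp Computable.fst) Computable.snd))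
      hzero).to₂
  · refine Nat.mem_rfind_of_forall_le hy fun m _ b hb => ?_
    obtain ⟨v, hv, rfl⟩ := (Part.mem_map_iff _).1 hb
    exact Part.mem_map _ (hf.sound l _ v hv)
  · have hagree : ∀ m ∈ Finset.range (y + 1), ∀ᶠ l in atTop,
        ∀ b ∈ (fun m => decide (m = 0)) <$> f (Nat.pair a m),
          b ∈ (fun m => decide (m = 0)) <$> qf (oracleString B l) (Nat.pair a m) := by
      intro m hm
      obtain ⟨b₀, hb₀⟩ : ∃ b, b ∈ (fun m => decide (m = 0)) <$> f (Nat.pair a m) := by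
        rcases (Finset.mem_range_succ_iff.1 hm).lt_or_eq with hlt | rfl
        · exact ⟨false, Nat.rfind_min hy hlt⟩
        · exact ⟨true, Nat.rfind_spec hy⟩
      obtain ⟨v, hv, -⟩ := (Part.mem_map_iff _).1 hb₀
      filter_upwards [hf.complete _ v hv] with l hl b hb
      obtain ⟨v', hv', rfl⟩ := (Part.mem_map_iff _).1 hb
      exact Part.mem_unique hv hv' ▸ Part.mem_map _ hl
    filter_upwards [(eventually_all_finset _).2 hagree] with l hl
    exact Nat.mem_rfind_of_forall_le hy fun m hm => hl m (Finset.mem_range_succ_iff.2 hm)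

end HasPartrecApprox

theorem OracleRecursiveIn.hasPartrecApprox {B : Set ℕ} {p : ℕ →. ℕ}
    (hp : OracleRecursiveIn B p) : HasPartrecApprox B p := by
  induction hp with
  | zero => exact .of_partrec Nat.Partrec.zero
  | succ => exact .of_partrec Nat.Partrec.succ
  | left => exact .of_partrec Nat.Partrec.left
  | right => exact .of_partrec Nat.Partrec.right
  | oracle => simpa only [Set.indicator_one_part] using HasPartrecApprox.oracle
  | pair _ _ ihf ihg => exact ihf.pair ihg
  | comp _ _ ihf ihg => exact ihf.comp ihg
  | prec _ _ ihf ihg => exact ihf.prec ihg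
  | rfind _ ih => exact ih.rfind

-- For `m = ⟨n, ⟨l, k⟩⟩`, the `evaln` arguments for running `k` steps on input `n` with the oracle
-- string of length `l`.
noncomputable def oracleQuery (B : Set ℕ) (m : ℕ) : ℕ :=
  Nat.pair (Encodable.encode (oracleString B m.unpair.2.unpair.1, m.unpair.1)) m.unpair.2.unpair.2

theorem oracleComputableIn_oracleQuery (B : Set ℕ) : OracleComputableIn B (oracleQuery B) :=
  (((oracleComputableIn_encode_oracleString B).comp (.of_computable
    (Computable.fst.comp (Computable.unpair.comp (Computable.snd.comp Computable.unpair))))).pair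
    (.of_computable (Computable.fst.comp Computable.unpair))).pair
    (.of_computable (Computable.snd.comp (Computable.unpair.comp
      (Computable.snd.comp Computable.unpair))))

open Nat.Partrec.Code in
theorem Partrec₂.exists_code_mem_iff_evaln {α β : Type*} [Primcodable α] [Primcodable β]
    {r : α → β → Part ℕ} (hr : Partrec₂ r) :
    ∃ c : Nat.Partrec.Code, ∀ a b y, y ∈ r a b ↔ ∃ k, y ∈ evaln k c (Encodable.encode (a, b)) := by
  obtain ⟨c, hc⟩ := exists_code.1 hr
  refine ⟨c, fun a b y => ?_⟩
  rw [← evaln_complete, hc]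
  simp [Encodable.encodek]

open Nat.Partrec.Code in
theorem OracleComputableIn.of_partrec_approx {B : Set ℕ} {r : List ℕ → ℕ → Part ℕ}
    (hr : Partrec₂ r) {f : ℕ → ℕ} (hsound : ∀ l n, ∀ y ∈ r (oracleString B l) n, y = f n)
    (hdom : ∀ n, ∃ l, (r (oracleString B l) n).Dom) : OracleComputableIn B f := by
  obtain ⟨c, hc⟩ := hr.exists_code_mem_iff_evaln
  have hquery := oracleComputableIn_oracleQuery B
  let run (x : ℕ) : Option ℕ := evaln x.unpair.2 c x.unpair.1
  have hrun : Computable run := (primrec_evaln.comp (((Primrec.snd.comp Primrec.unpair).pair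
    (Primrec.const c)).pair (Primrec.fst.comp Primrec.unpair))).to_comp
  have hex : ∀ n, ∃ t, (bif (run (oracleQuery B (Nat.pair n t))).isSome then 0 else 1) = 0 := by
    intro n
    obtain ⟨l, hl⟩ := hdom n
    obtain ⟨k, hk⟩ := (hc _ _ _).1 (Part.get_mem hl)
    refine ⟨Nat.pair l k, ?_⟩
    have hsome : (evaln k c (Encodable.encode (oracleString B l, n))).isSome :=
      Option.isSome_iff_exists.2 ⟨_, hk⟩
    simp only [run, oracleQuery, Nat.unpair_pair, hsome, cond_true]
  have htest : OracleComputableIn B fun m =>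
      bif (run (oracleQuery B (Nat.pair m.unpair.1 m.unpair.2))).isSome then 0 else 1 := by
    simp only [Nat.pair_unpair]
    exact (OracleComputableIn.of_computable (Computable.cond
      (Primrec.option_isSome.to_comp.comp hrun) (Computable.const 0) (Computable.const 1))).comp
      hquery
  have hsearch := OracleComputableIn.find htest hex
  refine ((OracleComputableIn.of_computable (Computable.option_getD hrun (Computable.const 0))).comp
    (hquery.comp ((OracleComputableIn.of_computable Computable.id).pair hsearch))).of_eq fun n => ?_
  have hfound := Nat.find_spec (hex n)
  set t₀ := Nat.find (hex n)
  have hsome : (run (oracleQuery B (Nat.pair n t₀))).isSome := by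
    revert hfound
    cases (run (oracleQuery B (Nat.pair n t₀))).isSome <;> simp
  obtain ⟨y, hy⟩ := Option.isSome_iff_exists.1 hsome
  show Part.some ((run (oracleQuery B (Nat.pair n t₀))).getD 0) = Part.some (f n)
  rw [hy, Option.getD_some]
  simp only [run, oracleQuery, Nat.unpair_pair] at hy
  exact congrArg Part.some (hsound _ _ y ((hc _ _ _).2 ⟨_, hy⟩))

theorem turingLE_of_ceIn_of_ceIn_compl {A B : Set ℕ} (hA : CEIn B A) (hAc : CEIn B Aᶜ) :
    TuringLE A B := by
  obtain ⟨p, hp, rfl⟩ := hA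
  obtain ⟨p', hp', hp'dom⟩ := hAc
  obtain ⟨q, hq, hqp⟩ := hp.hasPartrecApprox
  obtain ⟨q', hq', hqp'⟩ := hp'.hasPartrecApprox
  -- merge the two approximations, tagging answers of `q` with 1 and those of `q'` with 0
  obtain ⟨r, hr, hrq⟩ := Partrec.merge' (hq.map (Computable.const 1).to₂)
    (hq'.map (Computable.const 0).to₂)
  refine OracleComputableIn.of_partrec_approx (r := fun σ n => r (σ, n)) hr.to₂
    (fun l n y hy => ?_) (fun n => ?_)
  · rcases (hrq _).1 y hy with hy | hy <;> obtain ⟨v, hv, rfl⟩ := (Part.mem_map_iff _).1 hy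
    · exact (Set.indicator_of_mem ((PFun.mem_dom p n).2 ⟨v, hqp.sound l n v hv⟩) 1).symm
    · refine (Set.indicator_of_notMem ?_ 1).symm
      exact (hp'dom ▸ (PFun.mem_dom p' n).2 ⟨v, hqp'.sound l n v hv⟩ : n ∈ p.Domᶜ)
  · by_cases hn : n ∈ p.Dom
    · obtain ⟨v, hv⟩ := (PFun.mem_dom p n).1 hn
      obtain ⟨l, hl⟩ := (hqp.complete n v hv).exists
      exact ⟨l, (hrq _).2.2 (Or.inl (Part.dom_iff_mem.2 ⟨_, Part.mem_map _ hl⟩))⟩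
    · obtain ⟨v, hv⟩ := (PFun.mem_dom p' n).1 (hp'dom ▸ hn)
      obtain ⟨l, hl⟩ := (hqp'.complete n v hv).exists
      exact ⟨l, (hrq _).2.2 (Or.inr (Part.dom_iff_mem.2 ⟨_, Part.mem_map _ hl⟩))⟩

theorem preimage_eq_of_mem_class {γ : ℕ → ℕ → Prop} {A X : Set ℕ} {x y : ℕ} {f : ℕ → ℕ}
    [DecidablePred (· ∈ A)]
    (hx : {m | γ x m} ⊆ X) (hy : {m | γ y m} ∩ X = ∅)
    (hf : ∀ n, γ (if n ∈ A then x else y) (f n)) : f ⁻¹' X = A := by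
  ext n
  by_cases hn : n ∈ A
  · simpa [hn] using hx (by simpa [hn] using hf n)
  · simp only [Set.mem_preimage, hn, iff_false]
    exact fun hX => hy.subset ⟨by simpa [hn] using hf n, hX⟩

theorem turingLE_of_skolem_general (γ : ℕ → ℕ → Prop)
    (A B : Set ℕ) (hdiv : DivisibleFin γ 2 B)
    (hsk : ∀ h : ℕ → ℕ → ℕ, OracleComputableIn₂ A h →
      ∃ f : ℕ → ℕ, OracleComputableIn B f ∧ ∀ n : ℕ, γ (h n (f n)) (f n)) :
    TuringLE A B := by
  classical
  obtain ⟨x, X, hX, hxX, hdisj⟩ := hdiv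
  obtain ⟨f, hf, hfix⟩ := hsk (fun n _ => if n ∈ A then x 0 else x 1)
    ((OracleComputableIn.ite_mem _ _).comp (.of_computable (Computable.fst.comp Computable.unpair)))
  refine turingLE_of_ceIn_of_ceIn_compl ?_ ?_
  · rw [← preimage_eq_of_mem_class (hxX 0) (hdisj 1 0 (by decide)) hfix]
    exact (hX 0).preimage hf
  · rw [← preimage_eq_of_mem_class (A := Aᶜ) (hxX 1) (hdisj 0 1 (by decide))
      fun n => by simpa [ite_not] using hfix n]
    exact (hX 1).preimage hf

/-- If `γ` is `(2, B)`-divisible and every total `A`-computable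
binary function has a `B`-computable Skolem function for fixpoints modulo `γ`,
then `A ≤_T B`. -/
theorem turingLE_of_skolem (γ : ℕ → ℕ → Prop) (hγ : Equivalence γ)
    (A B : Set ℕ) (hdiv : DivisibleFin γ 2 B)
    (hsk : ∀ h : ℕ → ℕ → ℕ, OracleComputableIn₂ A h →
      ∃ f : ℕ → ℕ, OracleComputableIn B f ∧ ∀ n : ℕ, γ (h n (f n)) (f n)) :
    TuringLE A B :=
  turingLE_of_skolem_general γ A B hdiv hsk
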